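/- arXiv:2002.08788 — 9 statements merged into one kernel-verified Lean document; each statement's English description precedes it below -/
import Mathlib

section
/- Let C′ be a Hermitian 4×4 complex matrix, let t₁, t₂, k be real numbers, let T = diag(t₁, t₂, −t₁, −t₂) and let I = (0,0,1,1)ᵀ ∈ ℂ⁴. Suppose e′ = (e₁, conj(e₁), k/2, k/2)ᵀ satisfies C′e′ = I, and v′ = (v₁, −1, 1, 1)ᵀ satisfies v′ = C′Tv′. Then conj(e₁)·v₁ − e₁ = −(k + t₁ + t₂). -/
/-! Pair the two attainability equations through the Hermitian form: since `C'` is self-adjoint,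
`⟨e', C' T v'⟩ = ⟨C' e', T v'⟩`. The left side is `⟨e', v'⟩ = conj e₁ · v₁ - e₁ + k` because
`C' T v' = v'`, and the right side is `⟨I, T v'⟩ = -t₁ - t₂` because `C' e' = I`. -/

open Matrix Complex

theorem Matrix.IsHermitian.star_dotProduct_mulVec {n α : Type*} [Fintype n]
    [NonUnitalSemiring α] [StarRing α] {A : Matrix n n α} (hA : A.IsHermitian) (x y : n → α) :
    star x ⬝ᵥ A *ᵥ y = star (A *ᵥ x) ⬝ᵥ y := by
  rw [dotProduct_mulVec, star_mulVec, hA.eq]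

theorem point_A_scalar_relation
    (C' : Matrix (Fin 4) (Fin 4) ℂ) (hC : C'.IsHermitian)
    (t₁ t₂ k : ℝ) (e₁ v₁ : ℂ)
    (he : C'.mulVec ![e₁, (starRingEnd ℂ) e₁, (k : ℂ) / 2, (k : ℂ) / 2] = ![0, 0, 1, 1])
    (hv : ![v₁, -1, 1, 1] =
      C'.mulVec ((Matrix.diagonal ![(t₁ : ℂ), (t₂ : ℂ), -(t₁ : ℂ), -(t₂ : ℂ)]).mulVec
        ![v₁, -1, 1, 1])) :
    (starRingEnd ℂ) e₁ * v₁ - e₁ = -((k : ℂ) + (t₁ : ℂ) + (t₂ : ℂ)) := by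
  have pairing := hC.star_dotProduct_mulVec ![e₁, (starRingEnd ℂ) e₁, (k : ℂ) / 2, (k : ℂ) / 2]
    ((Matrix.diagonal ![(t₁ : ℂ), (t₂ : ℂ), -(t₁ : ℂ), -(t₂ : ℂ)]).mulVec ![v₁, -1, 1, 1])
  rw [← hv, he] at pairing
  simp only [dotProduct, Pi.star_apply, RCLike.star_def, Fin.sum_univ_four, cons_val_zero,
    cons_val_one, cons_val, RingHomCompTriple.comp_apply, RingHom.id_apply, map_div₀, conj_ofReal,
    map_ofNat, map_zero, map_one, mulVec_diagonal, mul_neg, mul_one, zero_mul, one_mul] at pairing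
  linear_combination pairing
end

section
/- Let λ be real, let y be real with y ≠ 0 and y ≠ −1/2, and let τ be real. Define e₁ = λ(2y+1)(1 + iτ(1 + 1/y))(1 − iτ)/(2(1 + iτ)) and v₁ = ((2y−1)/(2y+1) + iτ)(1 − iτ)/(1 + iτ)². Then conj(e₁)·v₁ − e₁ = −λ. -/
open Complex

/-!
Writing `t = iτ`, conjugation fixes `λ` and `y` and sends `t` to `-t`, so `conj e₁` is `e₁` with `t`
replaced by `-t`. The identity then becomes a rational identity in `λ, y, t` over any field, valid as
long as no denominator `2, y, 2y + 1, 1 ± t` vanishes; for `t = iτ` the last two have real part `1`.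
-/

section Trajectory

variable {K : Type*} [Field K]

def trajectoryE (lam y t : K) : K :=
  lam * (2 * y + 1) * (1 + t * (1 + 1 / y)) * (1 - t) / (2 * (1 + t))

def trajectoryV (y t : K) : K :=
  ((2 * y - 1) / (2 * y + 1) + t) * (1 - t) / (1 + t) ^ 2

theorem map_trajectoryE {L : Type*} [Field L] (f : K →+* L) (lam y t : K) :
    f (trajectoryE lam y t) = trajectoryE (f lam) (f y) (f t) := by
  simp only [trajectoryE, map_div₀, map_mul, map_add, map_sub, map_one, map_ofNat]

theorem trajectoryE_neg_mul_trajectoryV_sub_trajectoryE (lam y t : K) (h2 : (2 : K) ≠ 0)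
    (hy : y ≠ 0) (hy2 : 2 * y + 1 ≠ 0) (hp : 1 + t ≠ 0) (hm : 1 - t ≠ 0) :
    trajectoryE lam y (-t) * trajectoryV y t - trajectoryE lam y t = -lam := by
  have hm' : 1 + -t ≠ 0 := by rwa [← sub_eq_add_neg]
  unfold trajectoryE trajectoryV
  field_simp
  ring

end Trajectory

theorem one_add_I_mul_ofReal_ne_zero (τ : ℝ) : 1 + I * (τ : ℂ) ≠ 0 := by
  intro h
  simpa using congrArg re h

theorem one_sub_I_mul_ofReal_ne_zero (τ : ℝ) : 1 - I * (τ : ℂ) ≠ 0 := by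
  simpa [sub_eq_add_neg] using one_add_I_mul_ofReal_ne_zero (-τ)

theorem point_A_trajectory_identity (lam y τ : ℝ) (hy0 : y ≠ 0) (hy : y ≠ -1/2)
    (e₁ v₁ : ℂ)
    (he : e₁ = (lam : ℂ) * (2 * (y : ℂ) + 1) * (1 + Complex.I * (τ : ℂ) * (1 + 1 / (y : ℂ))) *
      (1 - Complex.I * (τ : ℂ)) / (2 * (1 + Complex.I * (τ : ℂ))))
    (hv : v₁ = (((2 * (y : ℂ) - 1) / (2 * (y : ℂ) + 1)) + Complex.I * (τ : ℂ)) *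
      (1 - Complex.I * (τ : ℂ)) / (1 + Complex.I * (τ : ℂ)) ^ 2) :
    (starRingEnd ℂ) e₁ * v₁ - e₁ = -(lam : ℂ) := by
  have he' : e₁ = trajectoryE (lam : ℂ) y (I * τ) := he
  have hv' : v₁ = trajectoryV (y : ℂ) (I * τ) := hv
  have hconj : starRingEnd ℂ e₁ = trajectoryE (lam : ℂ) y (-(I * τ)) := by
    rw [he', map_trajectoryE]
    simp only [conj_ofReal, map_mul, conj_I, neg_mul]
  have hy2 : 2 * (y : ℂ) + 1 ≠ 0 := by
    exact_mod_cast (show 2 * y + 1 ≠ 0 by contrapose! hy; linarith)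
  rw [hconj, hv', he']
  exact trajectoryE_neg_mul_trajectoryV_sub_trajectoryE _ _ _ two_ne_zero
    (ofReal_ne_zero.mpr hy0) hy2 (one_add_I_mul_ofReal_ne_zero τ) (one_sub_I_mul_ofReal_ne_zero τ)
end

section
/- Let λ be real, let y be real with −1 < y < 0, and let τ be real with τ²(1+y) = 1−y. Then e₁(y,τ) = λ(2y+1)(1 + iτ(1 + 1/y))(1 − iτ)/(2(1 + iτ)) is real and equals λ(2y+1)/(2y). -/
/-!
Writing `1 + iτ(1 + 1/y) = (y + iτ(1 + y))/y` and expanding,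
`(y + iτ(1 + y))(1 − iτ) = y + τ²(1 + y) + iτ = 1 + iτ` on the curve `τ²(1 + y) = 1 − y`.
So the numerator factor `(1 + iτ(1 + 1/y))(1 − iτ)` collapses to `(1 + iτ)/y`, which cancels
against the denominator `2(1 + iτ)`.
-/

open Complex

theorem one_add_I_mul_mul_one_sub_I_mul_of_sq_mul {y τ : ℂ} (hy : y ≠ 0)
    (hτ : τ ^ 2 * (1 + y) = 1 - y) :
    (1 + I * τ * (1 + 1 / y)) * (1 - I * τ) = (1 + I * τ) / y := by
  field_simp
  linear_combination hτ - τ ^ 2 * (1 + y) * I_sq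

theorem point_A_trajectory_boundary_real_general (lam y τ : ℝ)
    (hy0 : y < 0) (hτ : τ ^ 2 * (1 + y) = 1 - y) :
    (lam : ℂ) * (2 * (y : ℂ) + 1) * (1 + Complex.I * (τ : ℂ) * (1 + 1 / (y : ℂ))) *
      (1 - Complex.I * (τ : ℂ)) / (2 * (1 + Complex.I * (τ : ℂ)))
      = ((lam * (2 * y + 1) / (2 * y) : ℝ) : ℂ) := by
  have hy : (y : ℂ) ≠ 0 := by exact_mod_cast hy0.ne
  have hτC : (τ : ℂ) ^ 2 * (1 + y) = 1 - y := by exact_mod_cast hτ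
  have hI := one_add_I_mul_ofReal_ne_zero τ
  rw [mul_assoc _ (1 + _), one_add_I_mul_mul_one_sub_I_mul_of_sq_mul hy hτC]
  push_cast
  field_simp

theorem point_A_trajectory_boundary_real (lam y τ : ℝ)
    (hy1 : -1 < y) (hy0 : y < 0) (hτ : τ ^ 2 * (1 + y) = 1 - y) :
    (lam : ℂ) * (2 * (y : ℂ) + 1) * (1 + Complex.I * (τ : ℂ) * (1 + 1 / (y : ℂ))) *
      (1 - Complex.I * (τ : ℂ)) / (2 * (1 + Complex.I * (τ : ℂ)))
      = ((lam * (2 * y + 1) / (2 * y) : ℝ) : ℂ) :=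
  point_A_trajectory_boundary_real_general lam y τ hy0 hτ
end

section
/- Let λ > 0. For every (y,τ) with −1 < y < 0, y ≠ −1/2, and τ²(1+y) > 1−y, the complex number e₁(y,τ) = λ(2y+1)(1 + iτ(1 + 1/y))(1 − iτ)/(2(1 + iτ)) satisfies Re(e₁) < λ/2, Re(e₁) ≠ 0 and Im(e₁) ≠ 0. -/
/-!
Writing `e₁ = λ(2y+1)/(2y) · (y + iτ(y+1)) · (1 - iτ)/(1 + iτ)` and multiplying numerator and
denominator by `1 - iτ` gives
`e₁ = λ(2y+1)/(2y(1+τ²)) · ((y + τ²(y+2)) + iτ(1 - y - τ²(1+y)))`.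
Then `Re e₁ - λ/2 = λ(y² + τ²(y+1)²)/(y(1+τ²))`, which is negative for `y < 0`, while the condition
`τ²(1+y) > 1-y` makes the imaginary factor negative and gives `(1+y)(y + τ²(y+2)) > 2`.
-/

open Complex

noncomputable def trajectoryMap (lam y τ : ℝ) : ℂ :=
  (lam : ℂ) * (2 * (y : ℂ) + 1) * (1 + I * (τ : ℂ) * (1 + 1 / (y : ℂ))) *
    (1 - I * (τ : ℂ)) / (2 * (1 + I * (τ : ℂ)))

section TrajectoryMap

variable (lam y τ : ℝ)

theorem trajectoryMap_eq (hy : y ≠ 0) :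
    trajectoryMap lam y τ =
      ((lam * (2 * y + 1) / (2 * y * (1 + τ ^ 2)) * (y + τ ^ 2 * (y + 2)) : ℝ) : ℂ) +
      ((lam * (2 * y + 1) / (2 * y * (1 + τ ^ 2)) * (τ * (1 - y - τ ^ 2 * (1 + y))) : ℝ) : ℂ) * I := by
  have h1τ : (1 : ℂ) + I * τ ≠ 0 := fun h ↦ by simpa using congrArg re h
  have h1τ2 : (1 : ℂ) + (τ : ℂ) ^ 2 ≠ 0 := by exact_mod_cast (by positivity : (1 + τ ^ 2 : ℝ) ≠ 0)
  have hyC : (y : ℂ) ≠ 0 := ofReal_ne_zero.mpr hy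
  unfold trajectoryMap
  push_cast
  field_simp
  ring_nf
  simp only [I_sq]
  ring

theorem trajectoryMap_re (hy : y ≠ 0) :
    (trajectoryMap lam y τ).re =
      lam * (2 * y + 1) / (2 * y * (1 + τ ^ 2)) * (y + τ ^ 2 * (y + 2)) := by
  rw [trajectoryMap_eq lam y τ hy]
  simp only [add_re, mul_re, ofReal_re, ofReal_im, I_re, I_im]
  ring

theorem trajectoryMap_im (hy : y ≠ 0) :
    (trajectoryMap lam y τ).im =
      lam * (2 * y + 1) / (2 * y * (1 + τ ^ 2)) * (τ * (1 - y - τ ^ 2 * (1 + y))) := by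
  rw [trajectoryMap_eq lam y τ hy]
  simp only [add_im, mul_im, ofReal_re, ofReal_im, I_re, I_im]
  ring

theorem trajectoryMap_re_sub_half (hy : y ≠ 0) :
    (trajectoryMap lam y τ).re - lam / 2 =
      lam * (y ^ 2 + τ ^ 2 * (y + 1) ^ 2) / (y * (1 + τ ^ 2)) := by
  rw [trajectoryMap_re lam y τ hy]
  field_simp
  ring

theorem trajectoryMap_re_lt_half (hlam : 0 < lam) (hy : y < 0) :
    (trajectoryMap lam y τ).re < lam / 2 := by
  have hy0 : y ≠ 0 := hy.ne
  rw [← sub_neg, trajectoryMap_re_sub_half lam y τ hy0]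
  exact div_neg_of_pos_of_neg (by positivity) (mul_neg_of_neg_of_pos hy (by positivity))

end TrajectoryMap

theorem add_sq_mul_add_two_pos {y τ : ℝ} (hy : -1 < y) (hτ : τ ^ 2 * (1 + y) > 1 - y) :
    0 < y + τ ^ 2 * (y + 2) := by
  have h : 2 < (1 + y) * (y + τ ^ 2 * (y + 2)) := by nlinarith
  exact pos_of_mul_pos_right (h.trans' two_pos) (by linarith)

theorem point_A_image_in_Omega (lam y τ : ℝ) (hlam : 0 < lam)
    (hy1 : -1 < y) (hy0 : y < 0) (hy : y ≠ -1/2) (hτ : τ ^ 2 * (1 + y) > 1 - y)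
    (e₁ : ℂ)
    (he : e₁ = (lam : ℂ) * (2 * (y : ℂ) + 1) * (1 + Complex.I * (τ : ℂ) * (1 + 1 / (y : ℂ))) *
      (1 - Complex.I * (τ : ℂ)) / (2 * (1 + Complex.I * (τ : ℂ)))) :
    e₁.re < lam / 2 ∧ e₁.re ≠ 0 ∧ e₁.im ≠ 0 := by
  obtain rfl : e₁ = trajectoryMap lam y τ := he
  have hc : lam * (2 * y + 1) / (2 * y * (1 + τ ^ 2)) ≠ 0 := by
    have h2y : 2 * y + 1 ≠ 0 := fun h ↦ hy (by linarith)
    have hy0' : y ≠ 0 := hy0.ne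
    positivity
  have hτ0 : τ ≠ 0 := by rintro rfl; linarith
  refine ⟨trajectoryMap_re_lt_half lam y τ hlam hy0, ?_, ?_⟩
  · rw [trajectoryMap_re lam y τ hy0.ne]
    exact mul_ne_zero hc (add_sq_mul_add_two_pos hy1 hτ).ne'
  · rw [trajectoryMap_im lam y τ hy0.ne]
    exact mul_ne_zero hc (mul_ne_zero hτ0 (by linarith))
end

section
/- Let C′ be a Hermitian 4×4 complex matrix, let t₁, t₂ be nonzero reals and k real, let T = diag(t₁, t₂, −t₁, −t₂) and I = (0,0,1,1)ᵀ ∈ ℂ⁴. Suppose e′ = (e₁, conj(e₁), k/2, k/2)ᵀ satisfies C′e′ = I, and w′ = (w₁, 1, t₂/t₁, 1)ᵀ satisfies C′w′ = Tw′. Then t₁·conj(e₁)·w₁ + t₂·e₁ = t₂·η, where η = k + 1/t₁ + 1/t₂. -/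
/-! Since `C'` is Hermitian, `e'ᴴ (C' w') = (C' e')ᴴ w'`, i.e. `e'ᴴ T w' = Iᴴ w'`.
The left side expands to `t₁ conj(e₁) w₁ + t₂ e₁ - k t₂` and the right side is
`t₂/t₁ + 1 = t₂ (1/t₁ + 1/t₂)`. -/

open Matrix Complex

namespace Matrix.IsHermitian

variable {n R : Type*} [Fintype n] [CommSemiring R] [StarRing R] {A : Matrix n n R}

theorem star_dotProduct_mulVec_s8 (hA : A.IsHermitian) (x y : n → R) :
    star x ⬝ᵥ A *ᵥ y = star (A *ᵥ x) ⬝ᵥ y := by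
  rw [star_mulVec, hA.eq, dotProduct_mulVec]

theorem star_dotProduct_eq_of_mulVec_eq (hA : A.IsHermitian) {x y b : n → R} {B : Matrix n n R}
    (hx : A *ᵥ x = b) (hy : A *ᵥ y = B *ᵥ y) :
    star x ⬝ᵥ B *ᵥ y = star b ⬝ᵥ y := by
  rw [← hy, ← hx, hA.star_dotProduct_mulVec_s8]

end Matrix.IsHermitian

theorem point_D_scalar_relation
    (C' : Matrix (Fin 4) (Fin 4) ℂ) (hC : C'.IsHermitian)
    (t₁ t₂ k : ℝ) (ht₁ : t₁ ≠ 0) (ht₂ : t₂ ≠ 0) (e₁ w₁ : ℂ)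
    (he : C'.mulVec ![e₁, (starRingEnd ℂ) e₁, (k : ℂ) / 2, (k : ℂ) / 2] = ![0, 0, 1, 1])
    (hw : C'.mulVec ![w₁, 1, ((t₂ : ℂ) / (t₁ : ℂ)), 1] =
      (Matrix.diagonal ![(t₁ : ℂ), (t₂ : ℂ), -(t₁ : ℂ), -(t₂ : ℂ)]).mulVec
        ![w₁, 1, ((t₂ : ℂ) / (t₁ : ℂ)), 1]) :
    (t₁ : ℂ) * (starRingEnd ℂ) e₁ * w₁ + (t₂ : ℂ) * e₁ =
      (t₂ : ℂ) * ((k : ℂ) + 1 / (t₁ : ℂ) + 1 / (t₂ : ℂ)) := by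
  have hsymm := hC.star_dotProduct_eq_of_mulVec_eq he hw
  simp only [mulVec_diagonal, dotProduct, Fin.sum_univ_four, Pi.star_apply, cons_val_zero,
    cons_val_one, cons_val_two, cons_val_three, head_cons, tail_cons, Complex.star_def,
    conj_conj, map_div₀, conj_ofReal, map_ofNat, map_zero, map_one] at hsymm
  have ht₁' : (t₁ : ℂ) ≠ 0 := ofReal_ne_zero.mpr ht₁
  have ht₂' : (t₂ : ℂ) ≠ 0 := ofReal_ne_zero.mpr ht₂
  field_simp
  field_simp at hsymm
  linear_combination hsymm / 2
end

section
/- Let C′ be a Hermitian 4×4 complex matrix, let t₀, t₁, t₂ be reals with 2t₀ + t₁ + t₂ ≠ 0, let T = diag(t₁, t₂, −t₁, −t₂) and T₀ = diag(−t₀, −t₀, t₀, t₀). Suppose v′ = (v₁, 1, 1, 1)ᵀ satisfies v′ = C′Tv′, and c′ = (c₁, conj(c₁), 1, 1)ᵀ satisfies c′ = C′T₀c′. Then α₁·conj(c₁)·v₁ + α₂·c₁ = 1, where α₁ = (t₀ + t₁)/(2t₀ + t₁ + t₂) and α₂ = (t₀ + t₂)/(2t₀ + t₁ + t₂) (so α₁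 + α₂ = 1). -/
/-!
Since `C'` is Hermitian, the two eigen-relations `v' = C' T v'` and `c' = C' T₀ c'` give
`⟨c', T v'⟩ = ⟨C' T₀ c', T v'⟩ = ⟨T₀ c', C' T v'⟩ = ⟨T₀ c', v'⟩`.
Expanding both sides for the diagonal `T`, `T₀` yields
`(t₀ + t₁) conj(c₁) v₁ + (t₀ + t₂) c₁ = 2t₀ + t₁ + t₂`; divide by `2t₀ + t₁ + t₂`.
-/

open Matrix Complex
open scoped ComplexConjugate

theorem Matrix.IsHermitian.star_mulVec_dotProduct {α n : Type*} [Fintype n] [NonUnitalSemiring α]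
    [StarRing α] {A : Matrix n n α} (hA : A.IsHermitian) (x y : n → α) :
    star (A *ᵥ x) ⬝ᵥ y = star x ⬝ᵥ (A *ᵥ y) := by
  rw [star_mulVec, hA.eq, dotProduct_mulVec]

theorem Matrix.IsHermitian.star_dotProduct_mulVec_eq_of_eq_mulVec_mulVec {α n : Type*}
    [Fintype n] [NonUnitalSemiring α] [StarRing α] {A S T : Matrix n n α} (hA : A.IsHermitian)
    {v c : n → α} (hv : v = A *ᵥ (T *ᵥ v)) (hc : c = A *ᵥ (S *ᵥ c)) :
    star c ⬝ᵥ (T *ᵥ v) = star (S *ᵥ c) ⬝ᵥ v :=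
  calc star c ⬝ᵥ (T *ᵥ v) = star (A *ᵥ (S *ᵥ c)) ⬝ᵥ (T *ᵥ v) := by rw [← hc]
    _ = star (S *ᵥ c) ⬝ᵥ v := by rw [hA.star_mulVec_dotProduct, ← hv]

theorem ofReal_div_add_mul_add_ofReal_div_add_mul_eq_one {a b : ℝ} (hab : a + b ≠ 0) {x y : ℂ}
    (h : a * x + b * y = a + b) :
    ((a / (a + b) : ℝ) : ℂ) * x + ((b / (a + b) : ℝ) : ℂ) * y = 1 := by
  have hab' : (a : ℂ) + b ≠ 0 := by exact_mod_cast hab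
  push_cast
  field_simp
  exact h

theorem point_B_weighted_relation (C' : Matrix (Fin 4) (Fin 4) ℂ) (hC : C'.IsHermitian)
    (t₀ t₁ t₂ : ℝ) (v₁ c₁ : ℂ)
    (hv : ![v₁, 1, 1, 1] =
      C' *ᵥ (diagonal ![(t₁ : ℂ), (t₂ : ℂ), -(t₁ : ℂ), -(t₂ : ℂ)] *ᵥ ![v₁, 1, 1, 1]))
    (hc : ![c₁, conj c₁, 1, 1] =
      C' *ᵥ (diagonal ![-(t₀ : ℂ), -(t₀ : ℂ), (t₀ : ℂ), (t₀ : ℂ)] *ᵥ ![c₁, conj c₁, 1, 1])) :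
    ((t₀ + t₁ : ℝ) : ℂ) * (conj c₁ * v₁) + ((t₀ + t₂ : ℝ) : ℂ) * c₁ =
      (t₀ + t₁ : ℝ) + (t₀ + t₂ : ℝ) := by
  have key := hC.star_dotProduct_mulVec_eq_of_eq_mulVec_mulVec hv hc
  simp only [dotProduct, Fin.sum_univ_four, mulVec_diagonal, Pi.star_apply, cons_val_zero,
    cons_val_one, cons_val_two, cons_val_three, head_cons, tail_cons, star_mul',
    map_neg, map_one, RCLike.star_def, conj_conj, conj_ofReal] at key
  push_cast
  linear_combination key

theorem point_B_scalar_relation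
    (C' : Matrix (Fin 4) (Fin 4) ℂ) (hC : C'.IsHermitian)
    (t₀ t₁ t₂ : ℝ) (hden : 2 * t₀ + t₁ + t₂ ≠ 0) (v₁ c₁ : ℂ)
    (hv : ![v₁, 1, 1, 1] =
      C'.mulVec ((Matrix.diagonal ![(t₁ : ℂ), (t₂ : ℂ), -(t₁ : ℂ), -(t₂ : ℂ)]).mulVec
        ![v₁, 1, 1, 1]))
    (hc : ![c₁, (starRingEnd ℂ) c₁, 1, 1] =
      C'.mulVec ((Matrix.diagonal ![-(t₀ : ℂ), -(t₀ : ℂ), (t₀ : ℂ), (t₀ : ℂ)]).mulVec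
        ![c₁, (starRingEnd ℂ) c₁, 1, 1])) :
    (((t₀ + t₁) / (2 * t₀ + t₁ + t₂) : ℝ) : ℂ) * (starRingEnd ℂ) c₁ * v₁ +
      (((t₀ + t₂) / (2 * t₀ + t₁ + t₂) : ℝ) : ℂ) * c₁ = 1 := by
  have hsum : 2 * t₀ + t₁ + t₂ = (t₀ + t₁) + (t₀ + t₂) := by ring
  rw [hsum] at hden ⊢
  rw [mul_assoc]
  exact ofReal_div_add_mul_add_ofReal_div_add_mul_eq_one hden
    (point_B_weighted_relation C' hC t₀ t₁ t₂ v₁ c₁ hv hc)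
end

section
/- Let α₁, α₂ be real with α₁ + α₂ = 1 and α₁ ≠ 0, let θ be real, and let c₁ be a nonzero complex number. Set v₁ = (1 − α₂c₁)/(α₁·conj(c₁)) and, assuming the denominator is nonzero, set φ = conj(c₁)(1 − α₁·conj(c₁)e^{−2iθ} − α₂c₁e^{2iθ})e^{−3iθ}/(1 − α₂c₁ + α₂·conj(c₁)e^{−4iθ} − conj(c₁)e^{−2iθ}). Assume φ is real. Then for every real τ with 1 + e^{−iθ}τ ≠ 0 and 1 + φτ ≠ 0, the quantities v₁′ = (v₁ + e^{−3iθ}τ)(1 + e^{iθ}τ)/(1 + e^{−iθ}τ)² and c₁′ = (c₁ + e^{−2iθ}φτ)(1 + e^{iθ}τ)/((1 + φτ)(1 + e^{−iθ}τ)) satisfy α₁·conj(c₁′)·v₁′ + α₂·c₁′ = 1. -/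
open Complex ComplexConjugate

/-!
Clearing denominators, the relation becomes a quadratic identity in `τ`: its constant term is the
relation `α₁ conj(c₁) v₁ + α₂ c₁ = 1` defining `v₁`, its `τ²` term reduces to `α₁ + α₂ = 1`, and its
`τ` term is a linear equation for `φ`, whose solution is the given formula. Since `φ` and `τ` are
real, `conj(c₁′)` has the same shape as `c₁′` with `e^{iθ}` and `e^{-iθ}` exchanged, so everything
takes place in a field with two mutually inverse elements `E = e^{iθ}`, `e = e^{-iθ}`.
-/

section Trajectory

variable {K : Type*}

theorem trajectory_numerator_eq [CommRing K] {a₁ a₂ c d v f E e : K} (t : K)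
    (hEe : E * e = 1) (hsum : a₁ + a₂ = 1) (hv : a₁ * d * v + a₂ * c = 1)
    (hf : f * (a₁ * E ^ 2 * v + a₂ * e ^ 2 - 1) = e - a₁ * d * e ^ 3 - a₂ * c * E) :
    a₁ * (d + E ^ 2 * f * t) * (v + e ^ 3 * t) + a₂ * (c + e ^ 2 * f * t) * (1 + E * t) =
      (1 + f * t) * (1 + e * t) := by
  linear_combination hv + t * hf + f * e * t ^ 2 * hsum
    + (a₁ * f * e * t ^ 2 * (E * e + 1) + a₂ * f * e * t ^ 2) * hEe

theorem trajectory_linear_coeff_of_phi_eq [Field K] {a₂ c d v f E e : K} (a₁ : K)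
    (hd : d ≠ 0) (hEe : E * e = 1) (hv : a₁ * d * v + a₂ * c = 1)
    (hf : f * (1 - a₂ * c + a₂ * d * e ^ 4 - d * e ^ 2) =
      d * (1 - a₁ * d * e ^ 2 - a₂ * c * E ^ 2) * e ^ 3) :
    f * (a₁ * E ^ 2 * v + a₂ * e ^ 2 - 1) = e - a₁ * d * e ^ 3 - a₂ * c * E := by
  have he : e ≠ 0 := right_ne_zero_of_mul_eq_one hEe
  apply mul_left_cancel₀ (mul_ne_zero hd (pow_ne_zero 2 he))
  linear_combination hf + f * hv + (f * a₁ * d * v * (E * e + 1) - a₂ * c * d * E * e ^ 2) * hEe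

theorem trajectory_relation_of_phi_eq [Field K] {a₁ a₂ c d v f E e t : K}
    (hd : d ≠ 0) (hEe : E * e = 1) (hsum : a₁ + a₂ = 1) (hv : a₁ * d * v + a₂ * c = 1)
    (hf : f * (1 - a₂ * c + a₂ * d * e ^ 4 - d * e ^ 2) =
      d * (1 - a₁ * d * e ^ 2 - a₂ * c * E ^ 2) * e ^ 3)
    (hEt : 1 + E * t ≠ 0) (het : 1 + e * t ≠ 0) (hft : 1 + f * t ≠ 0) :
    a₁ * ((d + E ^ 2 * f * t) * (1 + e * t) / ((1 + f * t) * (1 + E * t))) *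
        ((v + e ^ 3 * t) * (1 + E * t) / (1 + e * t) ^ 2) +
      a₂ * ((c + e ^ 2 * f * t) * (1 + E * t) / ((1 + f * t) * (1 + e * t))) = 1 := by
  have key := trajectory_numerator_eq t hEe hsum hv
    (trajectory_linear_coeff_of_phi_eq a₁ hd hEe hv hf)
  calc _ = (a₁ * (d + E ^ 2 * f * t) * (v + e ^ 3 * t) + a₂ * (c + e ^ 2 * f * t) * (1 + E * t)) /
        ((1 + f * t) * (1 + e * t)) := by field_simp
    _ = 1 := by rw [key, div_self (mul_ne_zero hft het)]

end Trajectory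

theorem Complex.conj_exp_ofReal_mul_I (θ : ℝ) :
    conj (exp ((θ : ℂ) * I)) = exp (-(θ : ℂ) * I) := by
  rw [← exp_conj, map_mul, conj_ofReal, conj_I]; ring_nf

theorem point_B_trajectory_relation (α₁ α₂ θ : ℝ) (hsum : α₁ + α₂ = 1) (hα₁ : α₁ ≠ 0)
    (c₁ : ℂ) (hc : c₁ ≠ 0)
    (v₁ φ : ℂ)
    (hv₁ : v₁ = (1 - (α₂ : ℂ) * c₁) / ((α₁ : ℂ) * (starRingEnd ℂ) c₁))
    (hden : 1 - (α₂ : ℂ) * c₁ +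
        (α₂ : ℂ) * (starRingEnd ℂ) c₁ * Complex.exp (-(4 * (θ : ℂ)) * Complex.I) -
        (starRingEnd ℂ) c₁ * Complex.exp (-(2 * (θ : ℂ)) * Complex.I) ≠ 0)
    (hφ : φ = (starRingEnd ℂ) c₁ *
        (1 - (α₁ : ℂ) * (starRingEnd ℂ) c₁ * Complex.exp (-(2 * (θ : ℂ)) * Complex.I) -
          (α₂ : ℂ) * c₁ * Complex.exp ((2 * (θ : ℂ)) * Complex.I)) *
        Complex.exp (-(3 * (θ : ℂ)) * Complex.I) /
        (1 - (α₂ : ℂ) * c₁ +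
          (α₂ : ℂ) * (starRingEnd ℂ) c₁ * Complex.exp (-(4 * (θ : ℂ)) * Complex.I) -
          (starRingEnd ℂ) c₁ * Complex.exp (-(2 * (θ : ℂ)) * Complex.I)))
    (hφreal : φ.im = 0) :
    ∀ τ : ℝ, 1 + Complex.exp (-(θ : ℂ) * Complex.I) * (τ : ℂ) ≠ 0 → 1 + φ * (τ : ℂ) ≠ 0 →
      (α₁ : ℂ) * (starRingEnd ℂ)
          ((c₁ + Complex.exp (-(2 * (θ : ℂ)) * Complex.I) * φ * (τ : ℂ)) *
            (1 + Complex.exp ((θ : ℂ) * Complex.I) * (τ : ℂ)) /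
            ((1 + φ * (τ : ℂ)) * (1 + Complex.exp (-(θ : ℂ) * Complex.I) * (τ : ℂ)))) *
        ((v₁ + Complex.exp (-(3 * (θ : ℂ)) * Complex.I) * (τ : ℂ)) *
          (1 + Complex.exp ((θ : ℂ) * Complex.I) * (τ : ℂ)) /
          (1 + Complex.exp (-(θ : ℂ) * Complex.I) * (τ : ℂ)) ^ 2) +
      (α₂ : ℂ) * ((c₁ + Complex.exp (-(2 * (θ : ℂ)) * Complex.I) * φ * (τ : ℂ)) *
          (1 + Complex.exp ((θ : ℂ) * Complex.I) * (τ : ℂ)) /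
          ((1 + φ * (τ : ℂ)) * (1 + Complex.exp (-(θ : ℂ) * Complex.I) * (τ : ℂ)))) = 1 := by
  intro τ hτe hτφ
  set E := exp ((θ : ℂ) * I)
  set e := exp (-(θ : ℂ) * I)
  have hEe : E * e = 1 := by rw [← exp_add, ← exp_zero]; ring_nf
  have he2 : exp (-(2 * (θ : ℂ)) * I) = e ^ 2 := by rw [← exp_nat_mul]; push_cast; ring_nf
  have he3 : exp (-(3 * (θ : ℂ)) * I) = e ^ 3 := by rw [← exp_nat_mul]; push_cast; ring_nf
  have he4 : exp (-(4 * (θ : ℂ)) * I) = e ^ 4 := by rw [← exp_nat_mul]; push_cast; ring_nf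
  have hE2 : exp (2 * (θ : ℂ) * I) = E ^ 2 := by rw [← exp_nat_mul]; push_cast; ring_nf
  have hconjE : conj E = e := conj_exp_ofReal_mul_I θ
  have hconje : conj e = E := by rw [← hconjE, conj_conj]
  have hconjφ : conj φ = φ := conj_eq_iff_im.mpr hφreal
  have hτE : 1 + E * τ ≠ 0 := fun h ↦ hτe <| by
    simpa only [map_add, map_one, map_mul, hconjE, conj_ofReal, map_zero] using congrArg conj h
  have hd : conj c₁ ≠ 0 := (map_ne_zero conj).mpr hc
  have hv : (α₁ : ℂ) * conj c₁ * v₁ + α₂ * c₁ = 1 := by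
    rw [hv₁, mul_div_cancel₀ _ (mul_ne_zero (ofReal_ne_zero.mpr hα₁) hd)]; ring
  rw [he2, he4] at hden
  rw [he2, he3, he4, hE2, eq_div_iff hden] at hφ
  rw [he2, he3]
  simp only [map_div₀, map_mul, map_add, map_one, map_pow, hconjE, hconje, hconjφ, conj_ofReal]
  exact trajectory_relation_of_phi_eq hd hEe (by exact_mod_cast hsum) hv hφ hτE hτe hτφ
end

section
/- Let w be a nonzero complex number with real part w_R and imaginary part w_I, let δ be real, and define f(s) = (w − s)(1 + (i − δ)s)/(w(1 − (i + δ)s)) for real s (the denominator is nonzero for every real s). If γ is a real number satisfying 1 − 2δw_R + (δ² + 1)(w_R² − γ²) + 2w_I = 0, then f(w_R + γ) = f(w_R − γ). -/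
/-!
Cross-multiplying, `f(a) - f(b)` acquires the factor `a - b`; the cofactor is symmetric in `a, b`,
so it depends only on `a + b = 2 w_R` and `a b = w_R² - γ²`, and there it is minus the left-hand
side of the hypothesis on `γ`.
-/

open Complex

/-- The paper's trajectory `c₁'` is `trajectory w (i - δ) (i + δ) s / w`. -/
def trajectory {K : Type*} [Field K] (w p q s : K) : K :=
  (w - s) * (1 + p * s) / (1 - q * s)

theorem trajectory_eq_trajectory {K : Type*} [Field K] {w p q a b : K}
    (ha : 1 - q * a ≠ 0) (hb : 1 - q * b ≠ 0)
    (h : w * (p + q) - 1 - p * (a + b) + p * q * (a * b) = 0) :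
    trajectory w p q a = trajectory w p q b := by
  rw [trajectory, trajectory, div_eq_div_iff ha hb]
  linear_combination (a - b) * h

theorem one_sub_I_add_ofReal_mul_ofReal_ne_zero (δ s : ℝ) : 1 - (I + δ) * s ≠ 0 := by
  intro h
  have him : s = 0 := by simpa using congrArg Complex.im h
  simp [him] at h

theorem point_B_self_intersection_general (w : ℂ) (δ γ : ℝ)
    (hγ : 1 - 2 * δ * w.re + (δ ^ 2 + 1) * (w.re ^ 2 - γ ^ 2) + 2 * w.im = 0) :
    (fun s : ℝ => (w - (s : ℂ)) * (1 + (Complex.I - (δ : ℂ)) * (s : ℂ)) /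
        (w * (1 - (Complex.I + (δ : ℂ)) * (s : ℂ)))) (w.re + γ) =
    (fun s : ℝ => (w - (s : ℂ)) * (1 + (Complex.I - (δ : ℂ)) * (s : ℂ)) /
        (w * (1 - (Complex.I + (δ : ℂ)) * (s : ℂ)))) (w.re - γ) := by
  have hchord : w * ((I - δ) + (I + δ)) - 1 - (I - δ) * (↑(w.re + γ) + ↑(w.re - γ)) +
      (I - δ) * (I + δ) * (↑(w.re + γ) * ↑(w.re - γ)) = 0 := by
    have hγ' := congrArg ((↑) : ℝ → ℂ) hγ
    push_cast at hγ' ⊢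
    linear_combination
      -hγ' + 2 * I * (re_add_im w).symm + (w.re ^ 2 - γ ^ 2 + 2 * w.im : ℂ) * I_sq
  have key := trajectory_eq_trajectory (one_sub_I_add_ofReal_mul_ofReal_ne_zero δ (w.re + γ))
    (one_sub_I_add_ofReal_mul_ofReal_ne_zero δ (w.re - γ)) hchord
  simp only [mul_comm w, ← div_div]
  exact congrArg (· / w) key

theorem point_B_self_intersection (w : ℂ) (hw : w ≠ 0) (δ γ : ℝ)
    (hγ : 1 - 2 * δ * w.re + (δ ^ 2 + 1) * (w.re ^ 2 - γ ^ 2) + 2 * w.im = 0) :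
    (fun s : ℝ => (w - (s : ℂ)) * (1 + (Complex.I - (δ : ℂ)) * (s : ℂ)) /
        (w * (1 - (Complex.I + (δ : ℂ)) * (s : ℂ)))) (w.re + γ) =
    (fun s : ℝ => (w - (s : ℂ)) * (1 + (Complex.I - (δ : ℂ)) * (s : ℂ)) /
        (w * (1 - (Complex.I + (δ : ℂ)) * (s : ℂ)))) (w.re - γ) :=
  point_B_self_intersection_general w δ γ hγ
end

section
/- Let C′ be a Hermitian 4×4 complex matrix, let t₀ be real and t₁, t₂ be nonzero reals with t₁ + t₂ + 2t₀t₁t₂ ≠ 0, let T = diag(t₁, t₂, −t₁, −t₂) and T₀ = diag(−t₀, −t₀, t₀, t₀). Suppose w′ = (w₁, −1, t₂/t₁, 1)ᵀ satisfies C′w′ = Tw′, and c′ = (c₁, conj(c₁), 1, 1)ᵀ satisfies c′ = C′T₀c′. Then β₁(t₁/t₂)·conj(c₁)·w₁ − β₂·c₁ = −1, where β₁ = t₂(1 + t₀t₁)/(t₁ + t₂ + 2t₀t₁t₂) and β₂ = t₁(1 + t₀t₂)/(t₁ + t₂ + 2t₀t₁t₂) (so β₁ + β₂ = 1). -/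
open Matrix Complex

open scoped ComplexConjugate

/-!
Since `C'` is Hermitian, `c'ᴴ w' = (C' T₀ c')ᴴ w' = (T₀ c')ᴴ C' w' = (T₀ c')ᴴ (T w')`.
Expanding both sides for the given vectors gives one linear relation between `conj c₁ · w₁` and
`c₁`, which is `t₁ + t₂ + 2 t₀ t₁ t₂` times the claimed one.
-/

theorem Matrix.IsHermitian.star_dotProduct_eq {n R : Type*} [Fintype n] [CommSemiring R]
    [StarRing R] {A : Matrix n n R} (hA : A.IsHermitian) {u v x y : n → R}
    (hx : x = A *ᵥ u) (hy : A *ᵥ y = v) : star x ⬝ᵥ y = star u ⬝ᵥ v := by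
  rw [hx, star_mulVec, hA.eq, ← dotProduct_mulVec, hy]

abbrev shearTranslation (t₁ t₂ : ℝ) : Matrix (Fin 4) (Fin 4) ℂ :=
  diagonal ![(t₁ : ℂ), (t₂ : ℂ), -(t₁ : ℂ), -(t₂ : ℂ)]

abbrev bulkTranslation (t₀ : ℝ) : Matrix (Fin 4) (Fin 4) ℂ :=
  diagonal ![-(t₀ : ℂ), -(t₀ : ℂ), (t₀ : ℂ), (t₀ : ℂ)]

theorem point_C_linear_relation_of_pairing {t₀ t₁ t₂ : ℝ} (ht₁ : t₁ ≠ 0) {w₁ c₁ : ℂ}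
    (h : star ![c₁, conj c₁, 1, 1] ⬝ᵥ ![w₁, -1, (t₂ / t₁ : ℂ), 1] =
      star (bulkTranslation t₀ *ᵥ ![c₁, conj c₁, 1, 1]) ⬝ᵥ
        (shearTranslation t₁ t₂ *ᵥ ![w₁, -1, (t₂ / t₁ : ℂ), 1])) :
    t₁ * (1 + t₀ * t₁) * (conj c₁ * w₁) - t₁ * (1 + t₀ * t₂) * c₁ +
      (t₁ + t₂ + 2 * t₀ * t₁ * t₂) = 0 := by
  simp only [shearTranslation, bulkTranslation, mulVec_diagonal, dotProduct, Fin.sum_univ_four,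
    Pi.star_apply, RCLike.star_def, star_mul', map_one, map_neg, conj_ofReal,
    RingHomCompTriple.comp_apply, RingHom.id_apply, cons_val_zero, cons_val_one, cons_val,
    mul_one, one_mul, mul_neg, neg_mul, neg_neg] at h
  have ht₁' : (t₁ : ℂ) ≠ 0 := ofReal_ne_zero.mpr ht₁
  field_simp at h
  linear_combination h

theorem point_C_scalar_relation
    (C' : Matrix (Fin 4) (Fin 4) ℂ) (hC : C'.IsHermitian)
    (t₀ t₁ t₂ : ℝ) (ht₁ : t₁ ≠ 0) (ht₂ : t₂ ≠ 0)
    (hden : t₁ + t₂ + 2 * t₀ * t₁ * t₂ ≠ 0) (w₁ c₁ : ℂ)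
    (hw : C'.mulVec ![w₁, -1, ((t₂ : ℂ) / (t₁ : ℂ)), 1] =
      (Matrix.diagonal ![(t₁ : ℂ), (t₂ : ℂ), -(t₁ : ℂ), -(t₂ : ℂ)]).mulVec
        ![w₁, -1, ((t₂ : ℂ) / (t₁ : ℂ)), 1])
    (hc : ![c₁, (starRingEnd ℂ) c₁, 1, 1] =
      C'.mulVec ((Matrix.diagonal ![-(t₀ : ℂ), -(t₀ : ℂ), (t₀ : ℂ), (t₀ : ℂ)]).mulVec
        ![c₁, (starRingEnd ℂ) c₁, 1, 1])) :
    ((t₂ * (1 + t₀ * t₁) / (t₁ + t₂ + 2 * t₀ * t₁ * t₂) : ℝ) : ℂ) * ((t₁ : ℂ) / (t₂ : ℂ)) *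
        (starRingEnd ℂ) c₁ * w₁ -
      ((t₁ * (1 + t₀ * t₂) / (t₁ + t₂ + 2 * t₀ * t₁ * t₂) : ℝ) : ℂ) * c₁ = -1 := by
  have hlin := point_C_linear_relation_of_pairing ht₁ (hC.star_dotProduct_eq hc hw)
  have ht₂' : (t₂ : ℂ) ≠ 0 := ofReal_ne_zero.mpr ht₂
  have hden' : (t₁ + t₂ + 2 * t₀ * t₁ * t₂ : ℂ) ≠ 0 := by exact_mod_cast hden
  push_cast
  field_simp
  rw [div_eq_iff (by convert hden' using 1; ring)]
  linear_combination hlin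
end
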